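/- arXiv:2505.03316 — 2 statements merged into one kernel-verified Lean document; each statement's English description precedes it below -/
import Mathlib

section
/- Let N = 2n be even, and let i ↦ i′ and θ_i = (−1)^i be the type AII conventions (i′ = i−1 for i even, i′ = i+1 for i odd). Suppose elements s_{i,j}^{(r)} of an associative algebra (with s_{i,j}^{(0)} = δ_{i,j}) satisfy the quaternary relations (u²−v²)[s_{i,j}(u), s_{k,l}(v)] = (u+v)(s_{k,j}(u)s_{i,l}(v) − s_{k,j}(v)s_{i,l}(u)) − (u−v)(θ_k θ_{j′} s_{i,k′}(u)s_{j′,l}(v) − θ_i θ_{l′} s_{k,i′}(v)s_{l′,j}(u)) + θ_i θ_{j′}(s_{k,i′}(u)s_{j′,l}(v) − s_{k,i′}(v)s_{j′,l}(u)) for all indices. If for a single index k the relation s_{k′,k′}(−u) = s_{k,k}(u) − (s_{k,k}(u) − s_{k,k}(−u))/(2u) holds, then for all 1 ≤ i, j ≤ N the symmetry relation θ_i θ_j s_{j′,i′}(−u) = s_{i,j}(u) − (s_{i,j}(u) − s_{i,j}(−u))/(2u) holds. -/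
noncomputable section

/-- `s(u)` viewed in `A[[u⁻¹, v⁻¹]] = (A⟦X⟧)⟦Y⟧` (inner variable `X = u⁻¹`). -/
def lowX (A : Type*) [Semiring A] (c : ℕ → A) : PowerSeries (PowerSeries A) :=
  PowerSeries.C (PowerSeries.mk c)

/-- `s(v)` viewed in `A[[u⁻¹, v⁻¹]] = (A⟦X⟧)⟦Y⟧` (outer variable `Y = v⁻¹`). -/
def lowY (A : Type*) [Semiring A] (c : ℕ → A) : PowerSeries (PowerSeries A) :=
  PowerSeries.mk fun r => PowerSeries.C (c r)

/-- The variable `u⁻¹`. -/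
def XX (A : Type*) [Semiring A] : PowerSeries (PowerSeries A) :=
  PowerSeries.C PowerSeries.X

/-- The variable `v⁻¹`. -/
def YY (A : Type*) [Semiring A] : PowerSeries (PowerSeries A) :=
  PowerSeries.X

/-- The type AII involution `i ↦ i'` (0-indexed): `i' = i + 1` for `i` even,
`i' = i - 1` for `i` odd. -/
def primeIdx (n : ℕ) (i : Fin (2 * n)) : Fin (2 * n) :=
  if _h : (i : ℕ) % 2 = 0 then ⟨(i : ℕ) + 1, by have := i.isLt; omega⟩
  else ⟨(i : ℕ) - 1, by have := i.isLt; omega⟩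

/-- The sign `θ_i = (-1)^i` (1-indexed convention). -/
def thSign (n : ℕ) (i : Fin (2 * n)) : ℂ :=
  (-1 : ℂ) ^ ((i : ℕ) + 1)

/-- The type AII quaternary relations
`(u²-v²)[s_{ij}(u), s_{kl}(v)] = (u+v)(s_{kj}(u)s_{il}(v) - s_{kj}(v)s_{il}(u))
  - (u-v)(θ_k θ_{j'} s_{ik'}(u)s_{j'l}(v) - θ_i θ_{l'} s_{ki'}(v)s_{l'j}(u))
  + θ_i θ_{j'} (s_{ki'}(u)s_{j'l}(v) - s_{ki'}(v)s_{j'l}(u))`,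
written with denominators cleared by `x²y²`, `x = u⁻¹`, `y = v⁻¹`. -/
def QuatAII (A : Type*) [Ring A] [Algebra ℂ A] {N : ℕ}
    (pr : Fin N → Fin N) (th : Fin N → ℂ)
    (sc : Fin N → Fin N → ℕ → A) : Prop :=
  ∀ i j k l : Fin N,
    (YY A ^ 2 - XX A ^ 2) *
        (lowX A (sc i j) * lowY A (sc k l) - lowY A (sc k l) * lowX A (sc i j)) =
      XX A * YY A * (XX A + YY A) *
          (lowX A (sc k j) * lowY A (sc i l) - lowY A (sc k j) * lowX A (sc i l))
        - XX A * YY A * (YY A - XX A) *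
            ((th k * th (pr j)) • (lowX A (sc i (pr k)) * lowY A (sc (pr j) l))
              - (th i * th (pr l)) • (lowY A (sc k (pr i)) * lowX A (sc (pr l) j)))
        + XX A ^ 2 * YY A ^ 2 *
            ((th i * th (pr j)) •
              (lowX A (sc k (pr i)) * lowY A (sc (pr j) l)
                - lowY A (sc k (pr i)) * lowX A (sc (pr j) l)))

open PowerSeries

namespace Stmt16Aux

variable {A : Type*} [Ring A] [Algebra ℂ A]

theorem coeff_smul' (z : ℂ) (f : PowerSeries A) (n : ℕ) :
    PowerSeries.coeff n (z • f) = z • PowerSeries.coeff n f := rfl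

theorem coeff_smul'' (z : ℂ) (f : PowerSeries (PowerSeries A)) (n : ℕ) :
    PowerSeries.coeff n (z • f) = z • PowerSeries.coeff n f := rfl

def enegAux (f : PowerSeries A) : PowerSeries A :=
  PowerSeries.mk fun n => ((-1 : ℂ) ^ n) • PowerSeries.coeff n f

theorem coeff_enegAux (f : PowerSeries A) (n : ℕ) :
    PowerSeries.coeff n (enegAux f) = ((-1 : ℂ) ^ n) • PowerSeries.coeff n f :=
  coeff_mk _ _

/-- The map `X ↦ -X` on `A⟦X⟧`. -/
def eneg : PowerSeries A →+* PowerSeries A where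
  toFun := enegAux
  map_one' := by
    ext n
    rw [coeff_enegAux, PowerSeries.coeff_one]
    split <;> simp_all
  map_mul' f g := by
    ext n
    rw [coeff_enegAux, PowerSeries.coeff_mul, PowerSeries.coeff_mul, Finset.smul_sum]
    apply Finset.sum_congr rfl
    rintro ⟨a, b⟩ hab
    rw [Finset.HasAntidiagonal.mem_antidiagonal] at hab
    rw [coeff_enegAux, coeff_enegAux, smul_mul_assoc, mul_smul_comm, smul_smul, ← pow_add, hab]
  map_zero' := by ext n; rw [coeff_enegAux]; simp
  map_add' f g := by ext n; rw [coeff_enegAux, map_add, map_add, coeff_enegAux, coeff_enegAux, smul_add]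

theorem coeff_eneg (f : PowerSeries A) (n : ℕ) :
    PowerSeries.coeff n (eneg f) = ((-1 : ℂ) ^ n) • PowerSeries.coeff n f :=
  coeff_enegAux f n

theorem eneg_mk (c : ℕ → A) :
    eneg (PowerSeries.mk c) = PowerSeries.mk fun n => ((-1 : ℂ) ^ n) • c n := by
  ext n; rw [coeff_eneg, coeff_mk, coeff_mk]

theorem eneg_C (a : A) : eneg (PowerSeries.C a) = PowerSeries.C a := by
  ext n
  rw [coeff_eneg, PowerSeries.coeff_C]
  split <;> simp_all [PowerSeries.coeff_C]

theorem eneg_X : eneg (PowerSeries.X : PowerSeries A) = -PowerSeries.X := by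
  ext n
  rw [coeff_eneg, PowerSeries.coeff_X, map_neg, PowerSeries.coeff_X]
  split <;> simp_all

theorem eneg_smul (z : ℂ) (f : PowerSeries A) : eneg (z • f) = z • eneg f := by
  ext n
  rw [coeff_eneg, coeff_smul', coeff_smul', coeff_eneg, smul_smul, smul_smul, mul_comm]

def diagAux (f : PowerSeries (PowerSeries A)) : PowerSeries A :=
  PowerSeries.mk fun m => ∑ p ∈ Finset.HasAntidiagonal.antidiagonal m,
    PowerSeries.coeff p.1 (PowerSeries.coeff p.2 f)

theorem coeff_diagAux (f : PowerSeries (PowerSeries A)) (m : ℕ) :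
    PowerSeries.coeff m (diagAux f) = ∑ p ∈ Finset.HasAntidiagonal.antidiagonal m,
      PowerSeries.coeff p.1 (PowerSeries.coeff p.2 f) :=
  coeff_mk _ _

/-- "Evaluation of the outer variable at the inner variable". -/
def diag : PowerSeries (PowerSeries A) →+* PowerSeries A where
  toFun := diagAux
  map_one' := by
    ext m
    rw [coeff_diagAux, Finset.sum_eq_single (m, 0)]
    · simp [PowerSeries.coeff_one]
    · rintro ⟨a, b⟩ hab hne
      rw [Finset.HasAntidiagonal.mem_antidiagonal] at hab
      have hb : b ≠ 0 := by rintro rfl; exact hne (by rw [Prod.mk.injEq]; omega)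
      simp [PowerSeries.coeff_one, hb]
    · intro h; exact absurd (by simp) h
  map_mul' f g := by
    ext m
    have L1 : ∑ w ∈ (Finset.HasAntidiagonal.antidiagonal m).sigma
          (fun x => (Finset.HasAntidiagonal.antidiagonal x.2).sigma fun _ => Finset.HasAntidiagonal.antidiagonal x.1),
        PowerSeries.coeff w.2.2.1 (PowerSeries.coeff w.2.1.1 f) *
          PowerSeries.coeff w.2.2.2 (PowerSeries.coeff w.2.1.2 g) =
        ∑ x ∈ Finset.HasAntidiagonal.antidiagonal m, ∑ y ∈ Finset.HasAntidiagonal.antidiagonal x.2, ∑ z ∈ Finset.HasAntidiagonal.antidiagonal x.1,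
          PowerSeries.coeff z.1 (PowerSeries.coeff y.1 f) *
            PowerSeries.coeff z.2 (PowerSeries.coeff y.2 g) := by
      rw [Finset.sum_sigma]
      exact Finset.sum_congr rfl fun x _ => by rw [Finset.sum_sigma]
    have R1 : ∑ w ∈ (Finset.HasAntidiagonal.antidiagonal m).sigma
          (fun x => (Finset.HasAntidiagonal.antidiagonal x.1).sigma fun _ => Finset.HasAntidiagonal.antidiagonal x.2),
        PowerSeries.coeff w.2.1.1 (PowerSeries.coeff w.2.1.2 f) *
          PowerSeries.coeff w.2.2.1 (PowerSeries.coeff w.2.2.2 g) =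
        ∑ x ∈ Finset.HasAntidiagonal.antidiagonal m, ∑ y ∈ Finset.HasAntidiagonal.antidiagonal x.1, ∑ z ∈ Finset.HasAntidiagonal.antidiagonal x.2,
          PowerSeries.coeff y.1 (PowerSeries.coeff y.2 f) *
            PowerSeries.coeff z.1 (PowerSeries.coeff z.2 g) := by
      rw [Finset.sum_sigma]
      exact Finset.sum_congr rfl fun x _ => by rw [Finset.sum_sigma]
    have key : ∑ w ∈ (Finset.HasAntidiagonal.antidiagonal m).sigma
          (fun x => (Finset.HasAntidiagonal.antidiagonal x.2).sigma fun _ => Finset.HasAntidiagonal.antidiagonal x.1),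
        PowerSeries.coeff w.2.2.1 (PowerSeries.coeff w.2.1.1 f) *
          PowerSeries.coeff w.2.2.2 (PowerSeries.coeff w.2.1.2 g) =
        ∑ w ∈ (Finset.HasAntidiagonal.antidiagonal m).sigma
          (fun x => (Finset.HasAntidiagonal.antidiagonal x.1).sigma fun _ => Finset.HasAntidiagonal.antidiagonal x.2),
        PowerSeries.coeff w.2.1.1 (PowerSeries.coeff w.2.1.2 f) *
          PowerSeries.coeff w.2.2.1 (PowerSeries.coeff w.2.2.2 g) := by
      refine Finset.sum_nbij'
        (fun w => ⟨(w.2.2.1 + w.2.1.1, w.2.2.2 + w.2.1.2), ⟨(w.2.2.1, w.2.1.1), (w.2.2.2, w.2.1.2)⟩⟩)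
        (fun w => ⟨(w.2.1.1 + w.2.2.1, w.2.1.2 + w.2.2.2), ⟨(w.2.1.2, w.2.2.2), (w.2.1.1, w.2.2.1)⟩⟩)
        ?_ ?_ ?_ ?_ ?_
      · rintro ⟨⟨a, b⟩, ⟨⟨c, d⟩, ⟨p, q⟩⟩⟩ h
        simp only [Finset.mem_sigma, Finset.HasAntidiagonal.mem_antidiagonal, and_true, true_and] at h ⊢
        omega
      · rintro ⟨⟨a, b⟩, ⟨⟨c, d⟩, ⟨p, q⟩⟩⟩ h
        simp only [Finset.mem_sigma, Finset.HasAntidiagonal.mem_antidiagonal, and_true, true_and] at h ⊢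
        omega
      · rintro ⟨⟨a, b⟩, ⟨⟨c, d⟩, ⟨p, q⟩⟩⟩ h
        simp only [Finset.mem_sigma, Finset.HasAntidiagonal.mem_antidiagonal] at h
        simp only [Sigma.ext_iff, Prod.ext_iff, heq_eq_eq, and_true, true_and]
        omega
      · rintro ⟨⟨a, b⟩, ⟨⟨c, d⟩, ⟨p, q⟩⟩⟩ h
        simp only [Finset.mem_sigma, Finset.HasAntidiagonal.mem_antidiagonal] at h
        simp only [Sigma.ext_iff, Prod.ext_iff, heq_eq_eq, and_true, true_and]
        omega
      · rintro ⟨⟨a, b⟩, ⟨⟨c, d⟩, ⟨p, q⟩⟩⟩ _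
        rfl
    rw [coeff_diagAux, PowerSeries.coeff_mul]
    calc ∑ p ∈ Finset.HasAntidiagonal.antidiagonal m,
          PowerSeries.coeff p.1 (PowerSeries.coeff p.2 (f * g))
        = ∑ x ∈ Finset.HasAntidiagonal.antidiagonal m, ∑ y ∈ Finset.HasAntidiagonal.antidiagonal x.2, ∑ z ∈ Finset.HasAntidiagonal.antidiagonal x.1,
            PowerSeries.coeff z.1 (PowerSeries.coeff y.1 f) *
              PowerSeries.coeff z.2 (PowerSeries.coeff y.2 g) := by
          apply Finset.sum_congr rfl
          rintro ⟨a, b⟩ _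
          rw [PowerSeries.coeff_mul, map_sum]
          apply Finset.sum_congr rfl
          rintro ⟨c, d⟩ _
          rw [PowerSeries.coeff_mul]
      _ = ∑ x ∈ Finset.HasAntidiagonal.antidiagonal m, ∑ y ∈ Finset.HasAntidiagonal.antidiagonal x.1, ∑ z ∈ Finset.HasAntidiagonal.antidiagonal x.2,
            PowerSeries.coeff y.1 (PowerSeries.coeff y.2 f) *
              PowerSeries.coeff z.1 (PowerSeries.coeff z.2 g) := by
          rw [← L1, ← R1]; exact key
      _ = ∑ p ∈ Finset.HasAntidiagonal.antidiagonal m,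
            PowerSeries.coeff p.1 (diagAux f) * PowerSeries.coeff p.2 (diagAux g) := by
          apply Finset.sum_congr rfl
          rintro ⟨a, b⟩ _
          rw [coeff_diagAux, coeff_diagAux, Finset.sum_mul_sum]
  map_zero' := by ext m; rw [coeff_diagAux]; simp
  map_add' f g := by
    ext m
    rw [coeff_diagAux, map_add, coeff_diagAux, coeff_diagAux, ← Finset.sum_add_distrib]
    apply Finset.sum_congr rfl
    rintro ⟨a, b⟩ _
    rw [map_add, map_add]

theorem coeff_diag (f : PowerSeries (PowerSeries A)) (m : ℕ) :
    PowerSeries.coeff m (diag f) = ∑ p ∈ Finset.HasAntidiagonal.antidiagonal m,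
      PowerSeries.coeff p.1 (PowerSeries.coeff p.2 f) :=
  coeff_diagAux f m

theorem diag_C (g : PowerSeries A) : diag (PowerSeries.C g) = g := by
  ext m
  rw [coeff_diag, Finset.sum_eq_single (m, 0)]
  · simp
  · rintro ⟨a, b⟩ hab hne
    rw [Finset.HasAntidiagonal.mem_antidiagonal] at hab
    have hb : b ≠ 0 := by rintro rfl; exact hne (by rw [Prod.mk.injEq]; omega)
    simp [PowerSeries.coeff_C, hb]
  · intro h; exact absurd (by simp) h

theorem diag_X : diag (PowerSeries.X : PowerSeries (PowerSeries A)) = PowerSeries.X := by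
  ext m
  rw [coeff_diag, Finset.sum_eq_single (0, m)]
  · rw [PowerSeries.coeff_X, PowerSeries.coeff_X]
    split
    · next h => subst h; simp
    · next h => simp
  · rintro ⟨a, b⟩ hab hne
    rw [Finset.HasAntidiagonal.mem_antidiagonal] at hab
    rw [PowerSeries.coeff_X]
    split
    · next h =>
      subst h
      have ha : a ≠ 0 := by rintro rfl; exact hne (by rw [Prod.mk.injEq]; omega)
      simp [PowerSeries.coeff_one, ha]
    · next h => simp
  · intro h; exact absurd (by simp) h

theorem diag_smul (z : ℂ) (f : PowerSeries (PowerSeries A)) : diag (z • f) = z • diag f := by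
  ext m
  rw [coeff_diag, coeff_smul', coeff_diag, Finset.smul_sum]
  apply Finset.sum_congr rfl
  rintro ⟨a, b⟩ _
  rw [coeff_smul'', coeff_smul']

theorem diag_lowY (c : ℕ → A) : diag (lowY A c) = PowerSeries.mk c := by
  ext m
  rw [coeff_diag, coeff_mk, Finset.sum_eq_single (0, m)]
  · rw [lowY, coeff_mk]; simp
  · rintro ⟨a, b⟩ hab hne
    rw [Finset.HasAntidiagonal.mem_antidiagonal] at hab
    have ha : a ≠ 0 := by rintro rfl; exact hne (by rw [Prod.mk.injEq]; omega)
    rw [lowY, coeff_mk]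
    simp [PowerSeries.coeff_C, ha]
  · intro h; exact absurd (by simp) h

/-- The substitution `u ↦ -v` : `X ↦ -Y`, `Y ↦ Y` realized on `(A⟦X⟧)⟦Y⟧ → A⟦X⟧`. -/
def phi : PowerSeries (PowerSeries A) →+* PowerSeries A :=
  diag.comp (PowerSeries.map (eneg : PowerSeries A →+* PowerSeries A))

theorem phi_lowX (c : ℕ → A) :
    phi (lowX A c) = PowerSeries.mk fun n => ((-1 : ℂ) ^ n) • c n := by
  rw [phi, RingHom.comp_apply, lowX, PowerSeries.map_C, diag_C, eneg_mk]

theorem phi_lowY (c : ℕ → A) : phi (lowY A c) = PowerSeries.mk c := by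
  rw [phi, RingHom.comp_apply]
  have h : PowerSeries.map (eneg : PowerSeries A →+* PowerSeries A) (lowY A c) = lowY A c := by
    ext m n
    rw [PowerSeries.coeff_map, lowY, coeff_mk, eneg_C]
  rw [h, diag_lowY]

theorem phi_XX : phi (XX A) = -PowerSeries.X := by
  rw [phi, RingHom.comp_apply, XX, PowerSeries.map_C, eneg_X, diag_C]

theorem phi_YY : phi (YY A) = PowerSeries.X := by
  rw [phi, RingHom.comp_apply, YY, PowerSeries.map_X, diag_X]

theorem phi_smul (z : ℂ) (f : PowerSeries (PowerSeries A)) : phi (z • f) = z • phi f := by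
  rw [phi, RingHom.comp_apply, RingHom.comp_apply]
  have h : PowerSeries.map (eneg : PowerSeries A →+* PowerSeries A) (z • f) =
      z • PowerSeries.map (eneg : PowerSeries A →+* PowerSeries A) f := by
    ext m
    rw [PowerSeries.coeff_map, coeff_smul'', coeff_smul'', eneg_smul, PowerSeries.coeff_map]
  rw [h, diag_smul]

omit [Algebra ℂ A] in
/-- `X` is left-regular. -/
theorem X_mul_cancel {w : PowerSeries A} (h : PowerSeries.X * w = 0) : w = 0 := by
  ext d
  have h2 := congrArg (PowerSeries.coeff (d + 1)) h
  rwa [show (PowerSeries.X : PowerSeries A) = X ^ 1 by rw [pow_one], coeff_X_pow_mul, map_zero] at h2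

omit [Algebra ℂ A] in
/-- Left cancellation by a series with constant coefficient 1. -/
theorem mul_cancel_of_constantCoeff_one {a w : PowerSeries A}
    (ha : PowerSeries.constantCoeff a = 1) (h : a * w = 0) : w = 0 := by
  ext d
  induction d using Nat.strong_induction_on with
  | _ d IH =>
    have hc := congrArg (PowerSeries.coeff d) h
    rw [PowerSeries.coeff_mul, Finset.sum_eq_single (0, d)] at hc
    · rw [map_zero] at hc
      rw [PowerSeries.coeff_zero_eq_constantCoeff, ha, one_mul] at hc
      simpa using hc
    · rintro ⟨p, q⟩ hm hne
      rw [Finset.HasAntidiagonal.mem_antidiagonal] at hm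
      have hq : q < d := by
        rcases Nat.eq_zero_or_pos p with hp | hp
        · exact absurd (by rw [Prod.mk.injEq]; omega) hne
        · omega
      rw [IH q hq, map_zero, mul_zero]
    · intro h'; exact absurd (by simp) h'


theorem primeIdx_val (n : ℕ) (i : Fin (2 * n)) :
    (primeIdx n i : ℕ) = if (i : ℕ) % 2 = 0 then (i : ℕ) + 1 else (i : ℕ) - 1 := by
  unfold primeIdx
  split <;> rfl

theorem prime_prime (n : ℕ) (i : Fin (2 * n)) : primeIdx n (primeIdx n i) = i := by
  apply Fin.ext
  rw [primeIdx_val, primeIdx_val]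
  have := i.isLt
  split_ifs <;> omega

theorem th_prime (n : ℕ) (i : Fin (2 * n)) : thSign n (primeIdx n i) = -thSign n i := by
  unfold thSign
  rw [primeIdx_val]
  split_ifs with h
  · rw [show (i : ℕ) + 1 + 1 = ((i : ℕ) + 1) + 1 from rfl, pow_succ]
    ring
  · have h1 : (i : ℕ) - 1 + 1 = (i : ℕ) := by omega
    rw [h1, pow_succ]
    ring

theorem th_sq (n : ℕ) (i : Fin (2 * n)) : thSign n i * thSign n i = 1 := by
  unfold thSign
  rw [← mul_pow]
  norm_num

end Stmt16Aux

/-- let `N = 2n` be even, with the type AII conventions for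
`i ↦ i'` and `θ_i = (-1)^i`.  If elements `s_{ij}^{(r)}` (with
`s_{ij}^{(0)} = δ_{ij}`) satisfy the type AII quaternary relations, and for a
single index `k` the relation
`s_{k'k'}(-u) = s_{kk}(u) - (s_{kk}(u) - s_{kk}(-u))/(2u)` holds, then the full
symmetry relations
`θ_i θ_j s_{j'i'}(-u) = s_{ij}(u) - (s_{ij}(u) - s_{ij}(-u))/(2u)` hold for all
`i, j`. -/
theorem stmt16 (n : ℕ) (A : Type*) [Ring A] [Algebra ℂ A]
    (sc : Fin (2 * n) → Fin (2 * n) → ℕ → A)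
    (h0 : ∀ i j, sc i j 0 = if i = j then 1 else 0)
    (hquat : QuatAII A (primeIdx n) (thSign n) sc)
    (k : Fin (2 * n))
    (hk : PowerSeries.mk
        (fun r => ((-1 : ℂ) ^ r) • sc (primeIdx n k) (primeIdx n k) r) =
      PowerSeries.mk (sc k k) -
        (2 : ℂ)⁻¹ • (PowerSeries.X *
          (PowerSeries.mk (sc k k) -
            PowerSeries.mk fun r => ((-1 : ℂ) ^ r) • sc k k r))) :
    ∀ i j : Fin (2 * n),
      (thSign n i * thSign n j) •
          PowerSeries.mk
            (fun r => ((-1 : ℂ) ^ r) • sc (primeIdx n j) (primeIdx n i) r) =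
        PowerSeries.mk (sc i j) -
          (2 : ℂ)⁻¹ • (PowerSeries.X *
            (PowerSeries.mk (sc i j) -
              PowerSeries.mk fun r => ((-1 : ℂ) ^ r) • sc i j r)) := by
  intro i j
  have H := hquat (primeIdx n k) (primeIdx n i) k j
  have H2 := congrArg (Stmt16Aux.phi (A := A)) H
  simp only [map_mul, map_sub, map_add, map_pow, Stmt16Aux.phi_smul, Stmt16Aux.phi_lowX,
    Stmt16Aux.phi_lowY, Stmt16Aux.phi_XX, Stmt16Aux.phi_YY, Stmt16Aux.prime_prime,
    Stmt16Aux.th_prime] at H2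
  simp only [neg_sq, sub_self, zero_mul, neg_add_cancel, mul_zero, zero_sub] at H2
  rw [hk] at H2
  have hcomm : ∀ u v : PowerSeries A,
      u * (PowerSeries.X * v) = PowerSeries.X * (u * v) := by
    intro u v
    rw [← mul_assoc, (PowerSeries.commute_X u).eq, mul_assoc]
  set x := (PowerSeries.X : PowerSeries A) with hx_def
  set ta := thSign n k with hta_def
  set tb := thSign n i with htb_def
  set tc := thSign n j with htc_def
  set a := PowerSeries.mk (sc k k) with ha_def
  set a' := PowerSeries.mk (fun r => ((-1 : ℂ) ^ r) • sc k k r) with ha'_def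
  set b := PowerSeries.mk (sc i j) with hb_def
  set b' := PowerSeries.mk (fun r => ((-1 : ℂ) ^ r) • sc i j r) with hb'_def
  set c' := PowerSeries.mk (fun r => ((-1 : ℂ) ^ r) • sc (primeIdx n j) (primeIdx n i) r) with hc'_def
  have key : x * (x * (x * (a * ((2 * (ta * tb)) • b - (ta * tb) • (x * b)
      - (2 * (ta * tc)) • c' + (ta * tb) • (x * b'))))) =
      -(-x * x * (x - -x) * ((ta * tb) • ((a - (2 : ℂ)⁻¹ • (x * (a - a'))) * b) - (-ta * -tc) • (a * c'))) +
        x ^ 2 * x ^ 2 * (-ta * tb) • (a' * b - a * b') := by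
    simp only [pow_two, mul_sub, sub_mul, mul_add, add_mul, smul_sub, smul_add,
      mul_smul_comm, smul_mul_assoc, smul_smul, neg_mul, mul_neg, neg_neg, neg_smul,
      smul_neg, sub_neg_eq_add, mul_assoc, hcomm]
    module
  have H4 : x * (x * (x * (a * ((2 * (ta * tb)) • b - (ta * tb) • (x * b)
      - (2 * (ta * tc)) • c' + (ta * tb) • (x * b'))))) = 0 := key.trans H2.symm
  have H5 : a * ((2 * (ta * tb)) • b - (ta * tb) • (x * b)
      - (2 * (ta * tc)) • c' + (ta * tb) • (x * b')) = 0 :=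
    Stmt16Aux.X_mul_cancel (Stmt16Aux.X_mul_cancel (Stmt16Aux.X_mul_cancel H4))
  have ha1 : PowerSeries.constantCoeff a = 1 := by
    rw [ha_def, ← PowerSeries.coeff_zero_eq_constantCoeff, PowerSeries.coeff_mk, h0, if_pos rfl]
  have hw0 : (2 * (ta * tb)) • b - (ta * tb) • (x * b)
      - (2 * (ta * tc)) • c' + (ta * tb) • (x * b') = 0 :=
    Stmt16Aux.mul_cancel_of_constantCoeff_one ha1 H5
  have hsa : ta * ta = 1 := Stmt16Aux.th_sq n k
  have hsb : tb * tb = 1 := Stmt16Aux.th_sq n i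
  have hsc : tc * tc = 1 := Stmt16Aux.th_sq n j
  have fin : (tb * tc) • c' - (b - (2 : ℂ)⁻¹ • (x * (b - b'))) =
      (-(2⁻¹) * (ta * tb)) • ((2 * (ta * tb)) • b - (ta * tb) • (x * b)
        - (2 * (ta * tc)) • c' + (ta * tb) • (x * b')) := by
    simp only [mul_sub, smul_sub]
    match_scalars
    · linear_combination (-(tb * tc)) * hsa
    · linear_combination (tb * tb) * hsa + hsb
    · linear_combination (-(1 / 2 : ℂ) * (tb * tb)) * hsa + (-(1 / 2 : ℂ)) * hsb
    · linear_combination ((1 / 2 : ℂ) * (tb * tb)) * hsa + (1 / 2 : ℂ) * hsb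
  rw [hw0, smul_zero, sub_eq_zero] at fin
  exact fin


end
end

section
/- Let Y be the associative unital algebra generated by elements s_{i,j}^{(r)} for i, j ∈ {1,2} and r ≥ 1 (with s_{i,j}^{(0)} := δ_{i,j}), subject to the type AI quaternary relations (u²−v²)[s_{i,j}(u), s_{k,l}(v)] = (u+v)(s_{k,j}(u)s_{i,l}(v) − s_{k,j}(v)s_{i,l}(u)) − (u−v)(s_{i,k}(u)s_{j,l}(v) − s_{k,i}(v)s_{l,j}(u)) + (s_{k,i}(u)s_{j,l}(v) − s_{k,i}(v)s_{j,l}(u)) and the symmetry relations s_{j,i}(−u) = s_{i,j}(u) + (s_{i,j}(u) − s_{i,j}(−u))/(2u). Fix an odd positive integer ℓ, and let I_ℓ be the two-sided ideal generated by { s_{i,j}^{(r)} + (1/2)·s_{i,j}^{(r−1)} : i, j ∈ {1,2}, r > ℓ }. Then the image of s_{1,2}^{(ℓ)} in the quotient Y/I_ℓ is central: it commutes with the image of every s_{i,j}^{(r)}. -/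
noncomputable section

/-- The type AI quaternary relations (denominators cleared by `x²y²`). -/
def QuatAI (A : Type*) [Ring A] {N : ℕ} (sc : Fin N → Fin N → ℕ → A) : Prop :=
  ∀ i j k l : Fin N,
    (YY A ^ 2 - XX A ^ 2) *
        (lowX A (sc i j) * lowY A (sc k l) - lowY A (sc k l) * lowX A (sc i j)) =
      XX A * YY A * (XX A + YY A) *
          (lowX A (sc k j) * lowY A (sc i l) - lowY A (sc k j) * lowX A (sc i l))
        - XX A * YY A * (YY A - XX A) *
          (lowX A (sc i k) * lowY A (sc j l) - lowY A (sc k i) * lowX A (sc l j))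
        + XX A ^ 2 * YY A ^ 2 *
          (lowX A (sc k i) * lowY A (sc j l) - lowY A (sc k i) * lowX A (sc j l))

/-- The type AI symmetry relations
`s_{ji}(-u) = s_{ij}(u) + (s_{ij}(u) - s_{ij}(-u))/(2u)` as power series
identities in `X = u⁻¹`. -/
def SymAI (A : Type*) [Ring A] [Algebra ℂ A] {N : ℕ}
    (sc : Fin N → Fin N → ℕ → A) : Prop :=
  ∀ i j : Fin N,
    PowerSeries.mk (fun r => ((-1 : ℂ) ^ r) • sc j i r) =
      PowerSeries.mk (sc i j) +
        (2 : ℂ)⁻¹ • (PowerSeries.X *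
          (PowerSeries.mk (sc i j) -
            PowerSeries.mk fun r => ((-1 : ℂ) ^ r) • sc i j r))

namespace Stmt17Aux

open PowerSeries

variable {A : Type*} [Ring A]

/-- ℤ-extended coefficients. -/
def ez (c : ℕ → A) (b : ℤ) : A := if 0 ≤ b then c b.toNat else 0

lemma ez_natCast (c : ℕ → A) (n : ℕ) : ez c (n : ℤ) = c n := by simp [ez]

lemma ez_neg (c : ℕ → A) {b : ℤ} (hb : b < 0) : ez c b = 0 := by
  simp [ez, not_le.mpr hb]

/-- Outer (ℤ-indexed) coefficient extraction. -/
def F (b : ℤ) (f : PowerSeries (PowerSeries A)) : PowerSeries A :=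
  if 0 ≤ b then PowerSeries.coeff b.toNat f else 0

lemma F_sub (b : ℤ) (f g : PowerSeries (PowerSeries A)) : F b (f - g) = F b f - F b g := by
  unfold F; split <;> simp

lemma F_add (b : ℤ) (f g : PowerSeries (PowerSeries A)) : F b (f + g) = F b f + F b g := by
  unfold F; split <;> simp

lemma F_XX (b : ℤ) (f : PowerSeries (PowerSeries A)) : F b (XX A * f) = X * F b f := by
  unfold F XX; split <;> simp

lemma F_YY (b : ℤ) (f : PowerSeries (PowerSeries A)) : F b (YY A * f) = F (b - 1) f := by
  unfold F YY
  rcases lt_trichotomy b 0 with h | h | h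
  · rw [if_neg (by omega), if_neg (by omega)]
  · subst h
    rw [if_pos le_rfl, if_neg (by omega)]
    simp [coeff_zero_X_mul]
  · rw [if_pos (by omega), if_pos (by omega),
      show b.toNat = (b - 1).toNat + 1 by omega, coeff_succ_X_mul]

lemma F_XY (b : ℤ) (c d : ℕ → A) :
    F b (lowX A c * lowY A d) = mk c * C (ez d b) := by
  unfold F lowX lowY ez
  split
  · simp [coeff_C_mul, coeff_mk]
  · simp

lemma F_YX (b : ℤ) (c d : ℕ → A) :
    F b (lowY A d * lowX A c) = C (ez d b) * mk c := by
  unfold F lowX lowY ez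
  split
  · simp [coeff_mul_C, coeff_mk]
  · simp

lemma cA0 (a : ℕ) (c : ℕ → A) (y : A) : coeff (a + 2) (mk c * C y) = c (a + 2) * y := by
  simp [coeff_mul_C, coeff_mk]

lemma cA1 (a : ℕ) (c : ℕ → A) (y : A) :
    coeff (a + 2) (X * (mk c * C y)) = c (a + 1) * y := by
  rw [show a + 2 = (a + 1) + 1 from rfl, coeff_succ_X_mul]
  simp [coeff_mul_C, coeff_mk]

lemma cA2 (a : ℕ) (c : ℕ → A) (y : A) :
    coeff (a + 2) (X * (X * (mk c * C y))) = c a * y := by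
  rw [show a + 2 = (a + 1) + 1 from rfl, coeff_succ_X_mul, coeff_succ_X_mul]
  simp [coeff_mul_C, coeff_mk]

lemma cB0 (a : ℕ) (c : ℕ → A) (y : A) : coeff (a + 2) (C y * mk c) = y * c (a + 2) := by
  simp [coeff_C_mul, coeff_mk]

lemma cB1 (a : ℕ) (c : ℕ → A) (y : A) :
    coeff (a + 2) (X * (C y * mk c)) = y * c (a + 1) := by
  rw [show a + 2 = (a + 1) + 1 from rfl, coeff_succ_X_mul]
  simp [coeff_C_mul, coeff_mk]

lemma cB2 (a : ℕ) (c : ℕ → A) (y : A) :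
    coeff (a + 2) (X * (X * (C y * mk c))) = y * c a := by
  rw [show a + 2 = (a + 1) + 1 from rfl, coeff_succ_X_mul, coeff_succ_X_mul]
  simp [coeff_C_mul, coeff_mk]

lemma master {N : ℕ} {sc : Fin N → Fin N → ℕ → A} (hq : QuatAI A sc)
    (i j k l : Fin N) (a : ℕ) (b : ℤ) :
    sc i j (a + 2) * ez (sc k l) (b - 2) - sc i j a * ez (sc k l) b -
      (ez (sc k l) (b - 2) * sc i j (a + 2) - ez (sc k l) b * sc i j a) =
    sc k j a * ez (sc i l) (b - 1) + sc k j (a + 1) * ez (sc i l) (b - 2) -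
          (ez (sc k j) (b - 1) * sc i l a + ez (sc k j) (b - 2) * sc i l (a + 1)) -
        (sc i k (a + 1) * ez (sc j l) (b - 2) - sc i k a * ez (sc j l) (b - 1) -
          (ez (sc k i) (b - 2) * sc l j (a + 1) - ez (sc k i) (b - 1) * sc l j a)) +
      (sc k i a * ez (sc j l) (b - 2) - ez (sc k i) (b - 2) * sc j l a) := by
  have h := hq i j k l
  simp only [pow_two, mul_sub, sub_mul, mul_add, add_mul, mul_assoc] at h
  have hb := congrArg (F b) h
  simp only [F_sub, F_add, F_XX, F_YY, F_XY, F_YX] at hb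
  have h2 := congrArg (PowerSeries.coeff (a + 2)) hb
  simp only [map_sub, map_add, cA0, cA1, cA2, cB0, cB1, cB2] at h2
  rw [show b - 1 - 1 = b - 2 by ring] at h2
  exact h2

lemma comb {R : Type*} [AddCommGroup R] {L Rr G1 G2 : R}
    (h : L = Rr) (hm : G1 - G2 = L - Rr) : G1 = G2 := by
  rw [h, sub_self] at hm; exact sub_eq_zero.mp hm

lemma half_zero {B : Type*} [Ring B] [Algebra ℂ B] (x : B) (h : x = -x) : x = 0 := by
  have h2 : (2 : ℂ) • x = 0 := by rw [two_smul]; nth_rewrite 1 [h]; simp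
  calc x = ((2 : ℂ)⁻¹ * 2) • x := by norm_num
  _ = (2 : ℂ)⁻¹ • ((2 : ℂ) • x) := by rw [mul_smul]
  _ = 0 := by rw [h2, smul_zero]

lemma sym_extract {B : Type*} [Ring B] [Algebra ℂ B] {c d : ℕ → B}
    (h : PowerSeries.mk (fun r => ((-1 : ℂ) ^ r) • d r) =
      PowerSeries.mk c +
        (2 : ℂ)⁻¹ • (PowerSeries.X *
          (PowerSeries.mk c - PowerSeries.mk fun r => ((-1 : ℂ) ^ r) • c r)))
    (m : ℕ) : d (2 * m + 1) = -(c (2 * m + 1)) := by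
  have e1 : ((-1 : ℂ)) ^ (2 * m + 1) = -1 := Odd.neg_one_pow ⟨m, by ring⟩
  have e2 : ((-1 : ℂ)) ^ (2 * m) = 1 := Even.neg_one_pow ⟨m, by ring⟩
  have h2 := congrArg (PowerSeries.coeff (2 * m + 1)) h
  simp only [PowerSeries.coeff_mk, map_add, PowerSeries.coeff_smul,
    PowerSeries.coeff_succ_X_mul, map_sub, e1, e2, one_smul, neg_smul, sub_self, smul_zero,
    add_zero] at h2
  exact neg_eq_iff_eq_neg.mp h2

end Stmt17Aux

open Stmt17Aux in
/-- let `Y` be the algebra on generators `s_{ij}^{(r)}`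
(`i, j ∈ {1,2}`, `s_{ij}^{(0)} = δ_{ij}`) subject to the type AI quaternary and
symmetry relations (the `N = 2` twisted Yangian of type AI), let `ℓ` be an odd
positive integer and `I_ℓ` the two-sided ideal generated by
`s_{ij}^{(r)} + (1/2) s_{ij}^{(r-1)}` for `r > ℓ`.  Then the image of
`s_{1,2}^{(ℓ)}` in `Y/I_ℓ` is central: it commutes with the image of every
`s_{ij}^{(r)}`, i.e. each commutator lies in `I_ℓ` (the additive closure of
the products `a·g·b` with `g` a generator of the ideal). -/
theorem stmt17 (Y : Type*) [Ring Y] [Algebra ℂ Y]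
    (s : Fin 2 → Fin 2 → ℕ → Y)
    (h0 : ∀ i j, s i j 0 = if i = j then 1 else 0)
    (hquat : QuatAI Y s)
    (hsym : SymAI Y s)
    (ℓ : ℕ) (hpos : 0 < ℓ) (hodd : Odd ℓ) :
    ∀ (i j : Fin 2) (r : ℕ),
      s 0 1 ℓ * s i j r - s i j r * s 0 1 ℓ ∈
        AddSubgroup.closure
          {y : Y | ∃ (a b : Y) (i' j' : Fin 2) (r' : ℕ), ℓ < r' ∧
            y = a * (s i' j' r' + (2 : ℂ)⁻¹ • s i' j' (r' - 1)) * b} := by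
  classical
  set Sset : Set Y := {y : Y | ∃ (a b : Y) (i' j' : Fin 2) (r' : ℕ), ℓ < r' ∧
            y = a * (s i' j' r' + (2 : ℂ)⁻¹ • s i' j' (r' - 1)) * b} with hSset
  -- the additive closure is a two-sided ideal
  have hmulL : ∀ x y : Y, y ∈ AddSubgroup.closure Sset → x * y ∈ AddSubgroup.closure Sset := by
    intro x y hy
    refine AddSubgroup.closure_induction ?_ ?_ ?_ ?_ hy
    · rintro z ⟨a, b, i', j', r', hr', rfl⟩
      exact AddSubgroup.subset_closure ⟨x * a, b, i', j', r', hr', by simp [mul_assoc]⟩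
    · simpa using (AddSubgroup.closure Sset).zero_mem
    · intro a b _ _ ha hb; rw [mul_add]; exact add_mem ha hb
    · intro a _ ha; rw [mul_neg]; exact neg_mem ha
  have hmulR : ∀ x y : Y, x ∈ AddSubgroup.closure Sset → x * y ∈ AddSubgroup.closure Sset := by
    intro x y hx
    refine AddSubgroup.closure_induction ?_ ?_ ?_ ?_ hx
    · rintro z ⟨a, b, i', j', r', hr', rfl⟩
      exact AddSubgroup.subset_closure ⟨a, b * y, i', j', r', hr', by simp [mul_assoc]⟩
    · simpa using (AddSubgroup.closure Sset).zero_mem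
    · intro a b _ _ ha hb; rw [add_mul]; exact add_mem ha hb
    · intro a _ ha; rw [neg_mul]; exact neg_mem ha
  set I : TwoSidedIdeal Y := TwoSidedIdeal.mk' (AddSubgroup.closure Sset : Set Y)
    (AddSubgroup.closure Sset).zero_mem (fun hx hy => add_mem hx hy)
    (fun hx => neg_mem hx) (fun hy => hmulL _ _ hy) (fun hx => hmulR _ _ hx) with hI
  set π : Y →+* I.ringCon.Quotient := I.ringCon.mk' with hπdef
  have hker : ∀ x : Y, π x = 0 ↔ x ∈ AddSubgroup.closure Sset := by
    intro x
    have key : π x = 0 ↔ I.ringCon x 0 := by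
      rw [show (0 : I.ringCon.Quotient) = π 0 from (map_zero π).symm]
      exact RingCon.eq _
    rw [key, ← TwoSidedIdeal.mem_iff, hI, TwoSidedIdeal.mem_mk']
    rfl
  have hsmul : ∀ (q : ℂ) (x : Y), π (q • x) = q • π x := fun q x =>
    I.ringCon.coe_smul q x
  letI : Module ℂ I.ringCon.Quotient :=
    { (inferInstance : DistribMulAction ℂ I.ringCon.Quotient) with
      add_smul := fun a b x => Quotient.inductionOn' x fun y => by
        rw [show Quotient.mk'' y = π y from rfl, ← hsmul, ← hsmul, ← hsmul, ← map_add,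
          add_smul]
      zero_smul := fun x => Quotient.inductionOn' x fun y => by
        rw [show Quotient.mk'' y = π y from rfl, ← hsmul, zero_smul, map_zero] }
  -- symmetry facts
  obtain ⟨m, hm⟩ := hodd
  have hm' : ℓ = 2 * m + 1 := by omega
  have hsymm : ∀ p q : Fin 2, s q p ℓ = -(s p q ℓ) := by
    intro p q
    rw [hm']
    exact sym_extract (hsym p q) m
  have hdiag : ∀ p : Fin 2, s p p ℓ = 0 := fun p => half_zero _ (hsymm p p)
  -- truncation in the quotient
  have htr : ∀ (p q : Fin 2) (n : ℕ), ℓ < n →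
      π (s p q n) = (-(2 : ℂ)⁻¹) • π (s p q (n - 1)) := by
    intro p q n hn
    have hg : (s p q n + (2 : ℂ)⁻¹ • s p q (n - 1)) ∈ Sset :=
      ⟨1, 1, p, q, n, hn, by simp⟩
    have h0' : π (s p q n + (2 : ℂ)⁻¹ • s p q (n - 1)) = 0 :=
      (hker _).mpr (AddSubgroup.subset_closure hg)
    rw [map_add, hsmul, add_eq_zero_iff_eq_neg] at h0'
    rw [h0', ← neg_smul]
  have hπ2 : ∀ p q : Fin 2, π (s p q (ℓ + 1)) = (-(2 : ℂ)⁻¹) • π (s p q ℓ) := by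
    intro p q; simpa using htr p q (ℓ + 1) (by omega)
  have hπ3 : ∀ p q : Fin 2,
      π (s p q (ℓ + 2)) = (-(2 : ℂ)⁻¹) • ((-(2 : ℂ)⁻¹) • π (s p q ℓ)) := by
    intro p q
    have := htr p q (ℓ + 2) (by omega)
    simpa [hπ2 p q] using this
  have π00 : π (s 0 0 ℓ) = 0 := by rw [hdiag]; exact map_zero _
  have π11 : π (s 1 1 ℓ) = 0 := by rw [hdiag]; exact map_zero _
  have π10 : π (s 1 0 ℓ) = -(π (s 0 1 ℓ)) := by rw [hsymm 0 1, map_neg]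
  -- the quotient image of the master relation, at a = ℓ
  have mq : ∀ (i j k l : Fin 2) (b : ℤ),
      π (s i j (ℓ + 2)) * π (ez (s k l) (b - 2)) - π (s i j ℓ) * π (ez (s k l) b) -
        (π (ez (s k l) (b - 2)) * π (s i j (ℓ + 2)) - π (ez (s k l) b) * π (s i j ℓ)) =
      π (s k j ℓ) * π (ez (s i l) (b - 1)) + π (s k j (ℓ + 1)) * π (ez (s i l) (b - 2)) -
            (π (ez (s k j) (b - 1)) * π (s i l ℓ) +
              π (ez (s k j) (b - 2)) * π (s i l (ℓ + 1))) -
          (π (s i k (ℓ + 1)) * π (ez (s j l) (b - 2)) -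
              π (s i k ℓ) * π (ez (s j l) (b - 1)) -
            (π (ez (s k i) (b - 2)) * π (s l j (ℓ + 1)) -
              π (ez (s k i) (b - 1)) * π (s l j ℓ))) +
        (π (s k i ℓ) * π (ez (s j l) (b - 2)) - π (ez (s k i) (b - 2)) * π (s j l ℓ)) := by
    intro i j k l b
    have h := congrArg π (master hquat i j k l ℓ b)
    simpa only [map_sub, map_add, map_mul] using h
  -- the central commuting element
  have hcomm : ∀ (n : ℕ) (k l : Fin 2) (b : ℤ), b ≤ (n : ℤ) →
      π (s 0 1 ℓ) * π (ez (s k l) b) = π (ez (s k l) b) * π (s 0 1 ℓ) := by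
    intro n
    induction n with
    | zero =>
      intro k l b hb
      rcases lt_or_eq_of_le hb with hb' | hb'
      · rw [ez_neg _ (by omega : b < 0), map_zero, mul_zero, zero_mul]
      · rw [hb']
        rw [show ((0 : ℕ) : ℤ) = (0 : ℤ) from rfl] at *
        rw [show ez (s k l) 0 = s k l 0 from ez_natCast _ 0, h0]
        split
        · rw [map_one, mul_one, one_mul]
        · rw [map_zero, mul_zero, zero_mul]
    | succ n IH =>
      intro k l b hb
      rcases lt_or_eq_of_le hb with hb' | hb'
      · exact IH k l b (by omega)
      subst hb'
      have IH1 : π (s 0 1 ℓ) * π (ez (s k l) ((n : ℤ) + 1 - 1)) =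
          π (ez (s k l) ((n : ℤ) + 1 - 1)) * π (s 0 1 ℓ) := IH k l _ (by omega)
      have IH2 : π (s 0 1 ℓ) * π (ez (s k l) ((n : ℤ) + 1 - 2)) =
          π (ez (s k l) ((n : ℤ) + 1 - 2)) * π (s 0 1 ℓ) := IH k l _ (by omega)
      have h := mq 0 1 k l ((n : ℤ) + 1)
      rw [show ((n + 1 : ℕ) : ℤ) = (n : ℤ) + 1 by push_cast; ring]
      fin_cases k <;> fin_cases l <;>
        (simp only [Fin.zero_eta, Fin.mk_one] at h IH1 IH2 ⊢
         simp only [hπ3, hπ2, π00, π11, π10] at h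
         simp only [smul_mul_assoc, mul_smul_comm, neg_mul, mul_neg, smul_neg, neg_neg,
           smul_zero, zero_mul, mul_zero, neg_zero, add_zero, zero_add, sub_zero, zero_sub,
           sub_neg_eq_add] at h
         simp only [IH1, IH2] at h
         exact comb h.symm (by module))
  -- conclusion
  intro i j r
  rw [← hker]
  have hr := hcomm r i j (r : ℤ) le_rfl
  rw [ez_natCast] at hr
  rw [map_sub, map_mul, map_mul, hr, sub_self]

end
end
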